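/- Central component formula along nilpotent geodesics: In the 2-step nilpotent setup, for all t ∈ ℝ one has ⟨z(t), z₀⟩_Z = t‖z₀‖² + (t/2)‖h₀‖² − ½ ∫₀^t ⟨h₀, e^{s j(z₀)} h₀⟩_H ds. -/

import Mathlib

open MeasureTheory intervalIntegral NormedSpace
open scoped RealInnerProductSpace

/-!
Write `A = j z₀`, `f(s) = e^{sA} h₀` and `h(s) = ∫₀^s f`. Then `⟨[h, f], z₀⟩ = ⟨A h, f⟩`, and by the
fundamental theorem of calculus `A h(s) = f(s) − h₀`. Since `A` is skew-adjoint, `e^{sA}` is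
orthogonal, so `‖f(s)‖ = ‖h₀‖` and the integrand equals `‖h₀‖² − ⟨h₀, f(s)⟩`.
-/

section ExpFlow

variable {E : Type*} [NormedAddCommGroup E] [NormedSpace ℝ E] [CompleteSpace E]
  (A : E →L[ℝ] E) (x : E)

theorem hasDerivAt_exp_smul_apply (s : ℝ) :
    HasDerivAt (fun u : ℝ => exp (u • A) x) (A (exp (s • A) x)) s :=
  (ContinuousLinearMap.apply ℝ E x).hasFDerivAt.comp_hasDerivAt s (hasDerivAt_exp_smul_const' A s)

theorem continuous_exp_smul_apply : Continuous fun s : ℝ => exp (s • A) x :=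
  continuous_iff_continuousAt.2 fun s => (hasDerivAt_exp_smul_apply A x s).continuousAt

theorem apply_integral_exp_smul_apply (s : ℝ) :
    A (∫ u in (0:ℝ)..s, exp (u • A) x) = exp (s • A) x - x := by
  rw [← A.intervalIntegral_comp_comm ((continuous_exp_smul_apply A x).intervalIntegrable 0 s),
    integral_eq_sub_of_hasDerivAt (fun u _ => hasDerivAt_exp_smul_apply A x u)
      ((A.continuous.comp (continuous_exp_smul_apply A x)).intervalIntegrable 0 s)]
  simp

end ExpFlow

section SkewAdjoint

variable {H : Type*} [NormedAddCommGroup H] [InnerProductSpace ℝ H] [CompleteSpace H]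
  {A : H →L[ℝ] H}

theorem ContinuousLinearMap.mem_skewAdjoint_of_inner_map_left
    (hA : ∀ x y, ⟪A x, y⟫ = -⟪x, A y⟫) : A ∈ skewAdjoint (H →L[ℝ] H) := by
  rw [skewAdjoint.mem_iff, ContinuousLinearMap.star_eq_adjoint, eq_comm,
    ContinuousLinearMap.eq_adjoint_iff]
  intro x y
  rw [neg_apply, inner_neg_left, hA, neg_neg]

theorem norm_exp_smul_apply_of_mem_skewAdjoint (hA : A ∈ skewAdjoint (H →L[ℝ] H)) (s : ℝ)
    (x : H) : ‖exp (s • A) x‖ = ‖x‖ := by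
  -- `exp_mem_unitary_of_mem_skewAdjoint` asks for a `ℚ`-normed algebra structure.
  let +nondep : NormedAlgebra ℚ (H →L[ℝ] H) := .restrictScalars ℚ ℝ _
  have hsA : s • A ∈ skewAdjoint (H →L[ℝ] H) := skewAdjoint.smul_mem s hA
  have hexp : exp (s • A) ∈ unitary (H →L[ℝ] H) := exp_mem_unitary_of_mem_skewAdjoint hsA
  exact ContinuousLinearMap.norm_map_of_mem_unitary hexp x

theorem inner_apply_integral_exp_smul_apply (hA : A ∈ skewAdjoint (H →L[ℝ] H)) (x : H) (s : ℝ) :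
    ⟪A (∫ u in (0:ℝ)..s, exp (u • A) x), exp (s • A) x⟫ = ‖x‖ ^ 2 - ⟪x, exp (s • A) x⟫ := by
  rw [apply_integral_exp_smul_apply, inner_sub_left, real_inner_self_eq_norm_sq,
    norm_exp_smul_apply_of_mem_skewAdjoint hA, real_inner_comm]

end SkewAdjoint

theorem inner_intervalIntegral_left {E : Type*} [NormedAddCommGroup E] [InnerProductSpace ℝ E]
    [CompleteSpace E] {f : ℝ → E} {a b : ℝ} (hf : IntervalIntegrable f volume a b) (c : E) :
    ⟪∫ x in a..b, f x, c⟫ = ∫ x in a..b, ⟪f x, c⟫ := by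
  simpa only [innerSL_apply_apply, real_inner_comm c] using
    ((innerSL ℝ c).intervalIntegral_comp_comm hf).symm

/-- **Central component formula along nilpotent geodesics.** In the 2-step nilpotent setup,
with `h(t) = ∫₀^t e^{s j(z₀)} h₀ ds` and
`z(t) = t z₀ + ½ ∫₀^t [h(s), h'(s)] ds`, one has
`⟨z(t), z₀⟩ = t ‖z₀‖² + (t/2) ‖h₀‖² − ½ ∫₀^t ⟨h₀, e^{s j(z₀)} h₀⟩ ds`. -/
theorem nilpotent_geodesic_central_component
    {H Z : Type*}
    [NormedAddCommGroup H] [InnerProductSpace ℝ H] [FiniteDimensional ℝ H]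
    [NormedAddCommGroup Z] [InnerProductSpace ℝ Z] [FiniteDimensional ℝ Z]
    (j : Z →ₗ[ℝ] H →L[ℝ] H)
    (hskew : ∀ (z : Z) (x y : H), ⟪j z x, y⟫ = -⟪x, j z y⟫)
    (bracket : H →ₗ[ℝ] H →ₗ[ℝ] Z)
    (hbracket : ∀ (h k : H) (z : Z), ⟪bracket h k, z⟫ = ⟪j z h, k⟫)
    (z₀ : Z) (h₀ : H) (t : ℝ) :
    ⟪t • z₀ + (1 / 2 : ℝ) •
        ∫ s in (0:ℝ)..t,
          bracket (∫ u in (0:ℝ)..s, NormedSpace.exp (u • j z₀) h₀)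
            (NormedSpace.exp (s • j z₀) h₀), z₀⟫
      = t * ‖z₀‖ ^ 2 + (t / 2) * ‖h₀‖ ^ 2
        - (1 / 2 : ℝ) * ∫ s in (0:ℝ)..t, ⟪h₀, NormedSpace.exp (s • j z₀) h₀⟫ := by
  have hA := ContinuousLinearMap.mem_skewAdjoint_of_inner_map_left (hskew z₀)
  have hf := continuous_exp_smul_apply (j z₀) h₀
  have hbracket_cont : Continuous fun s : ℝ =>
      bracket (∫ u in (0:ℝ)..s, exp (u • j z₀) h₀) (exp (s • j z₀) h₀) :=
    bracket.toContinuousBilinearMap.continuous₂.comp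
      ((continuous_primitive (fun a b => hf.intervalIntegrable a b) 0).prodMk hf)
  rw [inner_add_left, real_inner_smul_left, real_inner_smul_left,
    inner_intervalIntegral_left (hbracket_cont.intervalIntegrable 0 t),
    integral_congr fun s _ => (hbracket _ _ z₀).trans (inner_apply_integral_exp_smul_apply hA h₀ s),
    integral_sub intervalIntegrable_const
      ((continuous_const.inner hf).intervalIntegrable 0 t),
    real_inner_self_eq_norm_sq]
  simp only [intervalIntegral.integral_const, sub_zero, smul_eq_mul]
  ring
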